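/- Let |ψ⟩ = a|00⟩ + b|11⟩ be a two-qubit state with a > b > 0 and a² + b² = 1. Then a pair of unitary 2×2 matrices (u, v) satisfies (u ⊗ v)|ψ⟩ = e^{iθ}|ψ⟩ for some phase θ if and only if u and v are diagonal with u = e^{iθ₁} diag(e^{iα₁}, e^{iα₂}) and v = e^{iθ₂} diag(e^{-iα₁}, e^{-iα₂}) for some real θ₁, θ₂, α₁, α₂ with θ₁ + θ₂ = θ (mod 2π). -/

import Mathlib

/-!
Writing `|ψ⟩ = vec D` with `D = diag(a, b)`, the condition `(u ⊗ v)|ψ⟩ = c|ψ⟩` becomes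
`u D vᵀ = c D`. Multiplying this by its adjoint, unitarity gives `u (D D*) u* = D D*`, so `u`
commutes with `diag(a², b²)`; as `a² ≠ b²`, `u` is diagonal, and by the transposed equation so
is `v`. For diagonal `u`, `v` the condition reads `u_ii v_ii = c`, and the entries of `u` are
phases `e^{iαᵢ}`.
-/

open Matrix

/-- The two-qubit state `a|00⟩ + b|11⟩`. -/
noncomputable def twoQubitState (a b : ℝ) : Fin 2 × Fin 2 → ℂ := fun p =>
  if p = (0, 0) then (a : ℂ) else if p = (1, 1) then (b : ℂ) else 0

/-- A diagonal phase matrix `e^{iθ} diag(e^{iα₁}, e^{iα₂})`. -/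
noncomputable def phaseDiag (θ α₁ α₂ : ℝ) : Matrix (Fin 2) (Fin 2) ℂ :=
  Complex.exp (θ * Complex.I) •
    !![Complex.exp (α₁ * Complex.I), 0; 0, Complex.exp (α₂ * Complex.I)]

namespace Matrix

variable {n R : Type*} [Fintype n] [DecidableEq n]

theorem commute_mul_conjTranspose_of_mul_mul_eq_smul [CommRing R] [StarRing R]
    {A B M : Matrix n n R} {c : R} (hA : A ∈ unitaryGroup n R) (hB : B ∈ unitaryGroup n R)
    (hc : c ∈ unitary R) (h : A * M * B = c • M) : Commute A (M * Mᴴ) := by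
  have hconj : A * (M * Mᴴ) * Aᴴ = M * Mᴴ :=
    calc A * (M * Mᴴ) * Aᴴ = (A * M * B) * (A * M * B)ᴴ := by
          simp only [conjTranspose_mul, Matrix.mul_assoc]
          rw [← Matrix.mul_assoc B, ← star_eq_conjTranspose B, mem_unitaryGroup_iff.mp hB,
            Matrix.one_mul]
      _ = M * Mᴴ := by
          rw [h, conjTranspose_smul, smul_mul_smul_comm, Unitary.mul_star_self_of_mem hc,
            one_smul]
  calc A * (M * Mᴴ) = A * (M * Mᴴ) * (Aᴴ * A) := by
        rw [← star_eq_conjTranspose A, mem_unitaryGroup_iff'.mp hA, Matrix.mul_one]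
    _ = M * Mᴴ * A := by rw [← Matrix.mul_assoc, hconj]

theorem isDiag_of_commute_diagonal [CommRing R] [NoZeroDivisors R] {A : Matrix n n R}
    {d : n → R} (hd : Function.Injective d) (h : Commute A (diagonal d)) : A.IsDiag := by
  intro i j hij
  have hij' := congrFun (congrFun h.eq i) j
  rw [mul_diagonal, diagonal_mul] at hij'
  have : (d j - d i) * A i j = 0 := by linear_combination hij'
  exact (mul_eq_zero.mp this).resolve_left (sub_ne_zero.mpr (hd.ne (Ne.symm hij)))

theorem isDiag_of_mul_diagonal_mul_eq_smul [CommRing R] [StarRing R] [NoZeroDivisors R]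
    {A B : Matrix n n R} {d : n → R} {c : R} (hA : A ∈ unitaryGroup n R)
    (hB : B ∈ unitaryGroup n R) (hc : c ∈ unitary R)
    (hd : Function.Injective fun i => d i * star (d i))
    (h : A * diagonal d * B = c • diagonal d) : A.IsDiag ∧ B.IsDiag := by
  have hdd : diagonal d * (diagonal d)ᴴ = diagonal fun i => d i * star (d i) := by
    rw [diagonal_conjTranspose, diagonal_mul_diagonal]; rfl
  have hT : Bᵀ * diagonal d * Aᵀ = c • diagonal d := by
    rw [← diagonal_transpose d, ← transpose_mul, ← transpose_mul, ← Matrix.mul_assoc, h,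
      transpose_smul]
  refine ⟨isDiag_of_commute_diagonal hd ?_,
    isDiag_transpose_iff.mp (isDiag_of_commute_diagonal hd ?_)⟩
  · exact hdd ▸ commute_mul_conjTranspose_of_mul_mul_eq_smul hA hB hc h
  · exact hdd ▸ commute_mul_conjTranspose_of_mul_mul_eq_smul
      (transpose_mem_unitaryGroup_iff.mpr hB) (transpose_mem_unitaryGroup_iff.mpr hA) hc hT

theorem diagonal_mem_unitaryGroup_iff [CommRing R] [StarRing R] {x : n → R} :
    diagonal x ∈ unitaryGroup n R ↔ ∀ i, x i ∈ unitary R := by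
  simp [mem_unitaryGroup_iff', Unitary.mem_iff_star_mul_self, star_eq_conjTranspose,
    diagonal_conjTranspose, ← diagonal_one, diagonal_eq_diagonal_iff]

theorem diagonal_mul_diagonal_mul_diagonal_eq_smul_iff [CommRing R] [NoZeroDivisors R]
    {x y d : n → R} (hd : ∀ i, d i ≠ 0) {c : R} :
    diagonal x * diagonal d * diagonal y = c • diagonal d ↔ ∀ i, x i * y i = c := by
  rw [diagonal_mul_diagonal, diagonal_mul_diagonal, ← diagonal_smul, diagonal_eq_diagonal_iff]
  refine forall_congr' fun i => ?_
  rw [mul_right_comm, Pi.smul_apply, smul_eq_mul]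
  exact mul_left_inj' (hd i)

end Matrix

theorem Complex.exp_ofReal_mul_I_mem_unitary (θ : ℝ) :
    Complex.exp (θ * Complex.I) ∈ unitary ℂ := by
  rw [Unitary.mem_iff_star_mul_self, Complex.star_def, ← Complex.exp_conj, ← Complex.exp_add]
  simp

theorem twoQubitState_eq_vec (a b : ℝ) : twoQubitState a b = vec (diagonal ![(a : ℂ), b]) := by
  ext ⟨i, j⟩
  fin_cases i <;> fin_cases j <;> simp [twoQubitState, vec]

theorem kroneckerMap_mulVec_twoQubitState_eq_smul_iff (a b : ℝ) (u v : Matrix (Fin 2) (Fin 2) ℂ)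
    (c : ℂ) :
    kroneckerMap (· * ·) u v *ᵥ twoQubitState a b = c • twoQubitState a b ↔
      u * diagonal ![(a : ℂ), b] * vᵀ = c • diagonal ![(a : ℂ), b] := by
  rw [twoQubitState_eq_vec, ← vec_smul, kronecker_mulVec_vec, vec_inj, ← transpose_inj,
    transpose_mul, transpose_mul, transpose_transpose, diagonal_transpose, transpose_smul,
    diagonal_transpose, Matrix.mul_assoc]

theorem phaseDiag_eq_diagonal (θ α₁ α₂ : ℝ) :
    phaseDiag θ α₁ α₂ = diagonal fun i => Complex.exp ((θ + ![α₁, α₂] i) * Complex.I) := by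
  ext i j
  fin_cases i <;> fin_cases j <;> simp [phaseDiag, ← Complex.exp_add, add_mul]

theorem phaseDiag_mul_diagonal_mul_transpose_phaseDiag (θ₁ θ₂ α₁ α₂ : ℝ) (d : Fin 2 → ℂ) :
    phaseDiag θ₁ α₁ α₂ * diagonal d * (phaseDiag θ₂ (-α₁) (-α₂))ᵀ =
      Complex.exp ((θ₁ + θ₂) * Complex.I) • diagonal d := by
  rw [phaseDiag_eq_diagonal, phaseDiag_eq_diagonal, diagonal_transpose, diagonal_mul_diagonal,
    diagonal_mul_diagonal, ← diagonal_smul]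
  have hphase (α : ℝ) : Complex.exp ((θ₁ + α) * Complex.I) *
      Complex.exp ((θ₂ + (-α : ℝ)) * Complex.I) = Complex.exp ((θ₁ + θ₂) * Complex.I) := by
    rw [← Complex.exp_add]
    push_cast
    ring_nf
  congr 1
  funext i
  have hneg : ![-α₁, -α₂] i = -![α₁, α₂] i := by fin_cases i <;> rfl
  rw [hneg, Pi.smul_apply, smul_eq_mul, mul_right_comm, hphase]

theorem exists_phaseDiag_of_mul_diagonal_mul_transpose_eq_smul {u v : Matrix (Fin 2) (Fin 2) ℂ}
    {d : Fin 2 → ℂ} (hd₀ : ∀ i, d i ≠ 0) (hd : Function.Injective fun i => d i * star (d i))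
    (hu : u ∈ unitaryGroup (Fin 2) ℂ) (hv : v ∈ unitaryGroup (Fin 2) ℂ) {θ : ℝ}
    (h : u * diagonal d * vᵀ = Complex.exp (θ * Complex.I) • diagonal d) :
    ∃ α₁ α₂ : ℝ, u = phaseDiag 0 α₁ α₂ ∧ v = phaseDiag θ (-α₁) (-α₂) := by
  obtain ⟨hu_diag, hv_diag⟩ := isDiag_of_mul_diagonal_mul_eq_smul hu
    (transpose_mem_unitaryGroup_iff.mpr hv) (Complex.exp_ofReal_mul_I_mem_unitary θ) hd h
  obtain ⟨x, rfl⟩ : ∃ x, u = diagonal x := ⟨_, hu_diag.diagonal_diag.symm⟩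
  obtain ⟨y, rfl⟩ : ∃ y, v = diagonal y :=
    ⟨_, (isDiag_transpose_iff.mp hv_diag).diagonal_diag.symm⟩
  rw [diagonal_transpose, diagonal_mul_diagonal_mul_diagonal_eq_smul_iff hd₀] at h
  choose α hα using fun i => (Complex.norm_eq_one_iff (x i)).mp
    (CStarRing.norm_of_mem_unitary (diagonal_mem_unitaryGroup_iff.mp hu i))
  have hy (i) : y i = Complex.exp ((θ + (-α i : ℝ)) * Complex.I) := by
    rw [add_mul, Complex.exp_add, ← h i, ← hα i, mul_comm, ← mul_assoc, ← Complex.exp_add]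
    simp
  refine ⟨α 0, α 1, ?_, ?_⟩ <;> rw [phaseDiag_eq_diagonal] <;> congr 1 <;> funext i
  · fin_cases i <;> simp [hα]
  · fin_cases i <;> simp [hy]

theorem stmt13 (a b : ℝ) (hba : b < a) (hb : 0 < b)
    (u v : Matrix (Fin 2) (Fin 2) ℂ)
    (hu : u ∈ Matrix.unitaryGroup (Fin 2) ℂ)
    (hv : v ∈ Matrix.unitaryGroup (Fin 2) ℂ) (θ : ℝ) :
    (Matrix.kroneckerMap (· * ·) u v).mulVec (twoQubitState a b) =
        Complex.exp (θ * Complex.I) • twoQubitState a b ↔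
      ∃ θ₁ θ₂ α₁ α₂ : ℝ,
        u = phaseDiag θ₁ α₁ α₂ ∧ v = phaseDiag θ₂ (-α₁) (-α₂) ∧
        Complex.exp ((θ₁ + θ₂) * Complex.I) = Complex.exp (θ * Complex.I) := by
  have hd₀ : ∀ i, ![(a : ℂ), b] i ≠ 0 := by
    intro i; fin_cases i <;> simp <;> linarith
  have hd : Function.Injective fun i => ![(a : ℂ), b] i * star (![(a : ℂ), b] i) := by
    intro i j hij
    fin_cases i <;> fin_cases j <;> simp at hij ⊢ <;> norm_cast at hij <;> nlinarith
  rw [kroneckerMap_mulVec_twoQubitState_eq_smul_iff]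
  constructor
  · intro h
    obtain ⟨α₁, α₂, rfl, rfl⟩ :=
      exists_phaseDiag_of_mul_diagonal_mul_transpose_eq_smul hd₀ hd hu hv h
    exact ⟨0, θ, α₁, α₂, rfl, rfl, by simp⟩
  · rintro ⟨θ₁, θ₂, α₁, α₂, rfl, rfl, hθ⟩
    rw [phaseDiag_mul_diagonal_mul_transpose_phaseDiag, hθ]
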